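/- arXiv:math/0302223 — 2 statements merged into one kernel-verified Lean document; each statement's English description precedes it below -/
import Mathlib

section
/- Let S be the additive submonoid of ℚ generated by the set {n + 1 + 1/2ⁿ : n ∈ ℕ, n ≥ 0}. If q ∈ ℚ is such that q + s ∈ S for every nonzero s ∈ S, then q ∈ S. -/
/-!
Write `aₙ = n + 1 + 2⁻ⁿ` and `Lⱼ = 2⁻ʲℤ`. Every `aₙ` with `n ≤ j` lies in `Lⱼ`, so an element of
`S` outside `Lⱼ` has the form `aₘ + r` with `m > j` and `r ∈ S`; in particular it exceeds `j + 2`.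
Since `q + a₀ = q + 2 ∈ S`, the rational `q` is dyadic, say `q ∈ Lⱼ` with `q ≤ j`. Then
`q + aⱼ₊₁ ∈ S` lies outside `Lⱼ`, so `q + aⱼ₊₁ = aₘ + r` with `m > j` and `r ∈ S`. If `m = i + 1`
with `i > j`, then `r = q + aⱼ₊₁ - aᵢ₊₁` lies outside `Lᵢ`, so `r > i + 2`, which is too large.
Hence `m = j + 1` and `q = r ∈ S`.
-/

theorem AddSubmonoid.exists_mem_notMem_eq_add_of_mem_closure {M : Type*} [AddCommMonoid M]
    {T : Set M} {H : AddSubmonoid M} {x : M} (hx : x ∈ closure T) (hxH : x ∉ H) :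
    ∃ t ∈ T, t ∉ H ∧ ∃ r ∈ closure T, x = t + r := by
  induction hx using AddSubmonoid.closure_induction with
  | mem t ht => exact ⟨t, ht, hxH, 0, zero_mem _, (add_zero t).symm⟩
  | zero => exact absurd H.zero_mem hxH
  | add x y hx hy ihx ihy =>
    by_cases hxH' : x ∈ H
    · obtain ⟨t, ht, htH, r, hr, rfl⟩ := ihy fun hyH => hxH (add_mem hxH' hyH)
      exact ⟨t, ht, htH, x + r, add_mem hx hr, add_left_comm x t r⟩
    · obtain ⟨t, ht, htH, r, hr, rfl⟩ := ihx hxH'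
      exact ⟨t, ht, htH, r + y, add_mem hr hy, add_assoc t r y⟩

def dyadicLattice (j : ℕ) : AddSubgroup ℚ := AddSubgroup.zmultiples (2 ^ j)⁻¹

theorem dyadicLattice_mono : Monotone dyadicLattice := by
  intro j k hjk
  rw [dyadicLattice, AddSubgroup.zmultiples_le, dyadicLattice, AddSubgroup.mem_zmultiples_iff]
  refine ⟨2 ^ (k - j), ?_⟩
  rw [zsmul_eq_mul, ← pow_sub_mul_pow 2 hjk]
  push_cast
  field_simp

theorem natCast_mem_dyadicLattice (n j : ℕ) : (n : ℚ) ∈ dyadicLattice j := by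
  rw [dyadicLattice, AddSubgroup.mem_zmultiples_iff]
  exact ⟨n * 2 ^ j, by rw [zsmul_eq_mul]; push_cast; field_simp⟩

theorem inv_two_pow_succ_notMem_dyadicLattice (j : ℕ) : (2 ^ (j + 1))⁻¹ ∉ dyadicLattice j := by
  rw [dyadicLattice, AddSubgroup.mem_zmultiples_iff]
  rintro ⟨z, hz⟩
  have h : ((z * 2 : ℤ) : ℚ) = 1 := by
    rw [zsmul_eq_mul, pow_succ] at hz
    field_simp at hz
    push_cast
    linarith
  have : z * 2 = 1 := by exact_mod_cast h
  omega

theorem inv_two_pow_mem_dyadicLattice_iff {n j : ℕ} : (2 ^ n)⁻¹ ∈ dyadicLattice j ↔ n ≤ j := by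
  refine ⟨fun h => ?_, fun h => dyadicLattice_mono h (AddSubgroup.mem_zmultiples _)⟩
  by_contra! hjn
  obtain ⟨i, rfl⟩ := Nat.exists_eq_add_of_lt hjn
  exact inv_two_pow_succ_notMem_dyadicLattice (j + i) (dyadicLattice_mono (Nat.le_add_right j i) h)

namespace ShiftedHalfPow

def gen (n : ℕ) : ℚ := n + 1 + 1 / 2 ^ n

def submonoid : AddSubmonoid ℚ := AddSubmonoid.closure (Set.range gen)

theorem gen_mem_submonoid (n : ℕ) : gen n ∈ submonoid :=
  AddSubmonoid.subset_closure ⟨n, rfl⟩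

theorem gen_zero : gen 0 = 2 := by
  norm_num [gen]

theorem gen_pos (n : ℕ) : 0 < gen n := by
  unfold gen
  positivity

theorem lt_gen (n : ℕ) : (n : ℚ) + 1 < gen n := by
  unfold gen
  linarith [show (0 : ℚ) < 1 / 2 ^ n by positivity]

theorem gen_le (n : ℕ) : gen n ≤ n + 2 := by
  unfold gen
  linarith [div_le_one_of_le₀ (one_le_pow₀ (one_le_two : (1 : ℚ) ≤ 2) (n := n)) (by positivity)]

theorem gen_mem_dyadicLattice_iff {n j : ℕ} : gen n ∈ dyadicLattice j ↔ n ≤ j := by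
  have h : (n : ℚ) + 1 ∈ dyadicLattice j := by exact_mod_cast natCast_mem_dyadicLattice (n + 1) j
  rw [gen, one_div, AddSubgroup.add_mem_cancel_left _ h, inv_two_pow_mem_dyadicLattice_iff]

theorem nonneg_of_mem_submonoid {x : ℚ} (hx : x ∈ submonoid) : 0 ≤ x := by
  have : submonoid ≤ AddSubmonoid.nonneg ℚ :=
    AddSubmonoid.closure_le.2 (Set.range_subset_iff.2 fun n => by simpa using (gen_pos n).le)
  exact this hx

theorem exists_mem_dyadicLattice_of_mem_submonoid {x : ℚ} (hx : x ∈ submonoid) :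
    ∃ k, x ∈ dyadicLattice k := by
  have : submonoid ≤ (⨆ k, dyadicLattice k).toAddSubmonoid :=
    AddSubmonoid.closure_le.2 (Set.range_subset_iff.2 fun n =>
      AddSubgroup.mem_iSup_of_mem n (gen_mem_dyadicLattice_iff.2 le_rfl))
  exact (AddSubgroup.mem_iSup_of_directed dyadicLattice_mono.directed_le).1 (this hx)

theorem exists_eq_gen_add_of_notMem_dyadicLattice {x : ℚ} {j : ℕ} (hx : x ∈ submonoid)
    (hxj : x ∉ dyadicLattice j) : ∃ m, j < m ∧ ∃ r ∈ submonoid, x = gen m + r := by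
  obtain ⟨_, ⟨m, rfl⟩, hmj, r, hr, rfl⟩ := AddSubmonoid.exists_mem_notMem_eq_add_of_mem_closure
    (H := (dyadicLattice j).toAddSubmonoid) hx hxj
  exact ⟨m, not_le.1 (mt gen_mem_dyadicLattice_iff.2 hmj), r, hr, rfl⟩

theorem add_two_lt_of_notMem_dyadicLattice {x : ℚ} {i : ℕ} (hx : x ∈ submonoid)
    (hxi : x ∉ dyadicLattice i) : (i : ℚ) + 2 < x := by
  obtain ⟨m, him, r, hr, rfl⟩ := exists_eq_gen_add_of_notMem_dyadicLattice hx hxi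
  have : (i : ℚ) + 1 ≤ m := by exact_mod_cast him
  linarith [lt_gen m, nonneg_of_mem_submonoid hr]

theorem mem_submonoid_of_add_gen_mem {q : ℚ} {j : ℕ} (hqj : q ∈ dyadicLattice j) (hqle : q ≤ j)
    (hq : q + gen (j + 1) ∈ submonoid) : q ∈ submonoid := by
  have hnot : q + gen (j + 1) ∉ dyadicLattice j := by
    rw [AddSubgroup.add_mem_cancel_left _ hqj, gen_mem_dyadicLattice_iff]
    omega
  obtain ⟨m, hjm, r, hr, hqr⟩ := exists_eq_gen_add_of_notMem_dyadicLattice hq hnot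
  obtain ⟨i, rfl⟩ : ∃ i, m = i + 1 := ⟨m - 1, by omega⟩
  rcases (Nat.lt_succ_iff.1 hjm).eq_or_lt with rfl | hji
  · rwa [show q = r by linarith]
  have hri : r ∉ dyadicLattice i := by
    intro hri
    have : gen (i + 1) ∈ dyadicLattice i := by
      rw [eq_sub_of_add_eq hqr.symm]
      exact sub_mem (add_mem (dyadicLattice_mono hji.le hqj) (gen_mem_dyadicLattice_iff.2 hji)) hri
    exact absurd (gen_mem_dyadicLattice_iff.1 this) (by omega)
  have hji' : (j : ℚ) + 1 ≤ i := by exact_mod_cast hji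
  have hgj := gen_le (j + 1)
  have hgi := lt_gen (i + 1)
  push_cast at hgj hgi
  linarith [add_two_lt_of_notMem_dyadicLattice hr hri]

end ShiftedHalfPow

open ShiftedHalfPow

/-- Let `S` be the additive submonoid of `ℚ` generated by `{n + 1 + 1/2ⁿ : n ∈ ℕ}`.
If `q ∈ ℚ` is such that `q + s ∈ S` for every nonzero `s ∈ S`, then `q ∈ S`. -/
theorem mem_of_add_mem_submonoid
    (S : AddSubmonoid ℚ)
    (hS : S = AddSubmonoid.closure {q : ℚ | ∃ n : ℕ, q = n + 1 + 1 / 2 ^ n})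
    (q : ℚ) (hq : ∀ s ∈ S, s ≠ 0 → q + s ∈ S) :
    q ∈ S := by
  obtain rfl : S = submonoid := hS.trans (congrArg _ (Set.ext fun x => by simp [gen, eq_comm]))
  obtain ⟨k, hk⟩ := exists_mem_dyadicLattice_of_mem_submonoid
    (hq _ (gen_mem_submonoid 0) (gen_pos 0).ne')
  have hqk : q ∈ dyadicLattice k := by
    simpa [gen_zero] using sub_mem hk (natCast_mem_dyadicLattice 2 k)
  obtain ⟨N, hN⟩ := exists_nat_ge q
  exact mem_submonoid_of_add_gen_mem (dyadicLattice_mono (le_max_left k N) hqk)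
    (hN.trans (by exact_mod_cast le_max_right k N))
    (hq _ (gen_mem_submonoid _) (gen_pos _).ne')
end

section
/- Let S be the additive submonoid of ℚ generated by the set {n + 1 + 1/2ⁿ : n ∈ ℕ, n ≥ 0}. Then for every q ∈ ℚ there exists a natural number N such that for all natural numbers n ≥ N, q + 1/2ⁿ ∉ S. -/
/-!
Every `s ∈ S` is a dyadic rational whose denominator `2^A` satisfies `A ≤ s`: this holds for the
generators `n + 1 + 2⁻ⁿ` and is preserved by addition. If `q + 2⁻ⁿ ∈ S` with `n > q + 1`, then
`2^(n-1) (q + 2⁻ⁿ)` is an integer, so `2ⁿ q` is an odd integer and the denominator of `q` is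
`2ⁿ > n`. This fails once `n ≥ q.den`.
-/

def boundedDyadic : AddSubmonoid ℚ where
  carrier := {s | ∃ A : ℕ, (A : ℚ) ≤ s ∧ ∃ z : ℤ, s * 2 ^ A = z}
  zero_mem' := ⟨0, le_rfl, 0, by simp⟩
  add_mem' := by
    rintro s t ⟨A, hA, z, hz⟩ ⟨B, hB, w, hw⟩
    refine ⟨A + B, by push_cast; linarith, z * 2 ^ B + w * 2 ^ A, ?_⟩
    calc (s + t) * 2 ^ (A + B) = s * 2 ^ A * 2 ^ B + t * 2 ^ B * 2 ^ A := by ring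
      _ = _ := by rw [hz, hw]; push_cast; ring

lemma add_one_add_inv_two_pow_mem_boundedDyadic (n : ℕ) :
    (n + 1 + 1 / 2 ^ n : ℚ) ∈ boundedDyadic := by
  refine ⟨n, by linarith [one_div_pos.mpr (pow_pos (two_pos (α := ℚ)) n)], (n + 1) * 2 ^ n + 1, ?_⟩
  push_cast
  field_simp

lemma mul_pow_eq_mul_pow_of_le {R : Type*} [Monoid R] {s a r : R} {A B : ℕ}
    (hr : s * a ^ A = r) (hAB : A ≤ B) : s * a ^ B = r * a ^ (B - A) := by
  obtain ⟨d, rfl⟩ := Nat.exists_eq_add_of_le hAB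
  rw [pow_add, ← mul_assoc, hr, Nat.add_sub_cancel_left]

lemma odd_mul_two_pow_of_add_inv_two_pow_mem {q : ℚ} {n : ℕ} (hn : q + 1 < n)
    (hmem : q + 1 / 2 ^ n ∈ boundedDyadic) : ∃ k : ℤ, Odd k ∧ q * 2 ^ n = k := by
  obtain ⟨A, hA, z, hz⟩ := hmem
  have hAn : A < n := by
    have : (1 : ℚ) / 2 ^ n ≤ 1 := div_le_one_of_le₀ (one_le_pow₀ one_le_two) (by positivity)
    have : (A : ℚ) < n := by linarith
    exact_mod_cast this
  refine ⟨2 * (z * 2 ^ (n - A - 1)) - 1, ⟨z * 2 ^ (n - A - 1) - 1, by ring⟩, ?_⟩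
  have h := mul_pow_eq_mul_pow_of_le hz hAn.le
  rw [show n - A = n - A - 1 + 1 by omega] at h
  have h2n : (1 : ℚ) / 2 ^ n * 2 ^ n = 1 := by field_simp
  push_cast at h ⊢
  linear_combination h - h2n

lemma den_eq_two_pow_of_mul_two_pow_eq_odd {q : ℚ} {n : ℕ} {k : ℤ} (hk : Odd k)
    (hq : q * 2 ^ n = k) : q.den = 2 ^ n := by
  have hq' : q = (k : ℚ) / ((2 ^ n : ℤ) : ℚ) := by
    rw [eq_div_iff (by positivity)]; push_cast; exact hq
  have h := Rat.den_div_eq_of_coprime (a := k) (b := 2 ^ n) (by positivity) ?_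
  · rw [← hq'] at h
    exact_mod_cast h
  · rw [Int.natAbs_pow]
    exact Nat.Coprime.pow_right _ (Int.natAbs_odd.mpr hk).coprime_two_right

/-- Let `S` be the additive submonoid of `ℚ` generated by `{n + 1 + 1/2ⁿ : n ∈ ℕ}`.
Then for every `q ∈ ℚ` there is `N ∈ ℕ` such that `q + 1/2ⁿ ∉ S` for all `n ≥ N`. -/
theorem eventually_add_inv_pow_two_not_mem
    (S : AddSubmonoid ℚ)
    (hS : S = AddSubmonoid.closure {q : ℚ | ∃ n : ℕ, q = n + 1 + 1 / 2 ^ n})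
    (q : ℚ) :
    ∃ N : ℕ, ∀ n : ℕ, N ≤ n → q + 1 / 2 ^ n ∉ S := by
  have hS_le : S ≤ boundedDyadic := by
    rw [hS, AddSubmonoid.closure_le]
    rintro _ ⟨n, rfl⟩
    exact add_one_add_inv_two_pow_mem_boundedDyadic n
  refine ⟨max q.den (⌈q⌉₊ + 2), fun n hn hmem => ?_⟩
  have hqn : q + 1 < n := by
    have : (⌈q⌉₊ + 2 : ℚ) ≤ n := by exact_mod_cast le_of_max_le_right hn
    linarith [Nat.le_ceil q]
  obtain ⟨k, hk, hqk⟩ := odd_mul_two_pow_of_add_inv_two_pow_mem hqn (hS_le hmem)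
  have hden : q.den = 2 ^ n := den_eq_two_pow_of_mul_two_pow_eq_odd hk hqk
  exact n.lt_two_pow_self.not_ge (hden ▸ le_of_max_le_left hn)
end
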